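/- For each k ≥ 3, the generalised W-state tensor W_k = ∑_{i=1}^{k} e₀⊗⋯⊗e₁⊗⋯⊗e₀ (with e₁ in position i) in (ℂ²)^{⊗k} has tensor rank exactly k. -/

import Mathlib

open Finset

/-- The rank of a `k`-tensor in coordinates: the least `r` such that the tensor is a
sum of `r` simple tensors. -/
noncomputable def krank {k : ℕ} {I : Fin k → Type*} [∀ j, Fintype (I j)]
    (t : (∀ j, I j) → ℂ) : ℕ :=
  sInf {r | ∃ v : Fin r → ∀ j, I j → ℂ, ∀ f, t f = ∑ m, ∏ j, v m j (f j)}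

/-- The generalised W-state tensor `W_k = ∑_{i=1}^k e₀⊗⋯⊗e₁⊗⋯⊗e₀` (with `e₁` in
position `i`) in `(ℂ²)^{⊗k}`, in coordinates. -/
noncomputable def Wtensor (k : ℕ) : (Fin k → Fin 2) → ℂ := fun f =>
  ∑ i : Fin k, ∏ j : Fin k, if f j = (if j = i then 1 else 0) then 1 else 0


lemma fin2_cases (b : Fin 2) (h : b ≠ 1) : b = 0 := by omega

lemma Wtensor_eq (k : ℕ) (f : Fin k → Fin 2) :
    (∑ i : Fin k, ∏ j : Fin k, if f j = (if j = i then 1 else 0) then (1:ℂ) else 0)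
      = if (∑ j, (f j : ℕ)) = 1 then 1 else 0 := by
  have h1 : ∀ i : Fin k, (∏ j : Fin k, if f j = (if j = i then 1 else 0) then (1:ℂ) else 0)
      = if (∀ j, f j = (if j = i then 1 else 0)) then 1 else 0 := by
    intro i
    rw [Finset.prod_boole]
    simp
  simp only [h1]
  by_cases hS : (∑ j, (f j : ℕ)) = 1
  · have hex : ∃ i, f i = 1 := by
      by_contra h
      push_neg at h
      have h0 : ∀ j, (f j : ℕ) = 0 := by
        intro j; have := fin2_cases _ (h j); omega
      rw [Finset.sum_congr rfl (fun j _ => h0 j)] at hS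
      simp at hS
    obtain ⟨i₀, hi₀⟩ := hex
    have hrest : ∑ j ∈ univ.erase i₀, (f j : ℕ) = 0 := by
      have h3 := Finset.add_sum_erase univ (fun j => (f j : ℕ)) (mem_univ i₀)
      have h4 : (f i₀ : ℕ) = 1 := by rw [hi₀]; rfl
      omega
    have huniq : ∀ j, f j = (if j = i₀ then 1 else 0) := by
      intro j
      by_cases hj : j = i₀
      · simp [hj, hi₀]
      · rw [if_neg hj]
        have : (f j : ℕ) = 0 := by
          have := (Finset.sum_eq_zero_iff).mp hrest j (by simp [hj])
          exact this
        omega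
    rw [if_pos hS, Finset.sum_eq_single i₀]
    · simp [huniq]
    · intro b _ hb
      rw [if_neg]
      intro hall
      have h2 := hall i₀
      rw [hi₀, if_neg (fun h => hb h.symm)] at h2
      exact absurd h2 (by omega)
    · simp
  · rw [if_neg hS, Finset.sum_eq_zero]
    intro i _
    rw [if_neg]
    intro hall
    apply hS
    rw [Finset.sum_congr rfl (fun j _ => by rw [hall j])]
    simp [apply_ite (Fin.val), Finset.sum_ite_eq']



/-- decomposition with scalar coefficients -/
def CDecomp (k r : ℕ) (t : (Fin k → Fin 2) → ℂ) : Prop :=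
  ∃ a : Fin r → ℂ, ∃ v : Fin r → Fin k → Fin 2 → ℂ,
    ∀ f, t f = ∑ m, a m * ∏ j, v m j (f j)

/-- W-tensor plus lam * e0^{⊗k} -/
noncomputable def Gt (k : ℕ) (lam : ℂ) : (Fin k → Fin 2) → ℂ := fun f =>
  (∑ i : Fin k, ∏ j : Fin k, if f j = (if j = i then 1 else 0) then 1 else 0)
    + lam * ∏ j, if f j = 0 then 1 else 0

lemma Gt_slice0 (n : ℕ) (lam : ℂ) (f : Fin n → Fin 2) :
    Gt (n+1) lam (Fin.cons 0 f) = Gt n lam f := by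
  unfold Gt
  congr 1
  · rw [Fin.sum_univ_succ]
    have h0 : (∏ j : Fin (n+1), if (Fin.cons 0 f : Fin (n+1) → Fin 2) j
        = (if j = 0 then 1 else 0) then (1:ℂ) else 0) = 0 := by
      rw [Fin.prod_univ_succ]
      simp
    rw [h0, zero_add]
    apply Finset.sum_congr rfl
    intro i _
    rw [Fin.prod_univ_succ]
    simp only [Fin.cons_zero, Fin.cons_succ]
    simp [Ne.symm (Fin.succ_ne_zero i), Fin.succ_inj]
  · congr 1
    rw [Fin.prod_univ_succ]
    simp
lemma Gt_slice1 (n : ℕ) (lam : ℂ) (f : Fin n → Fin 2) :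
    Gt (n+1) lam (Fin.cons 1 f) = ∏ j, if f j = 0 then (1:ℂ) else 0 := by
  unfold Gt
  rw [Fin.sum_univ_succ]
  have h0 : (∏ j : Fin (n+1), if (Fin.cons 1 f : Fin (n+1) → Fin 2) j
      = (if j = (0:Fin (n+1)) then 1 else 0) then (1:ℂ) else 0)
      = ∏ j, if f j = 0 then (1:ℂ) else 0 := by
    rw [Fin.prod_univ_succ]
    simp only [Fin.cons_zero, Fin.cons_succ]
    simp [Fin.succ_ne_zero]
  rw [h0]
  have h1 : ∀ i : Fin n, (∏ j : Fin (n+1), if (Fin.cons 1 f : Fin (n+1) → Fin 2) j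
      = (if j = i.succ then 1 else 0) then (1:ℂ) else 0) = 0 := by
    intro i
    rw [Fin.prod_univ_succ]
    simp [Ne.symm (Fin.succ_ne_zero i)]
  rw [Finset.sum_congr rfl (fun i _ => h1 i), Finset.sum_const_zero]
  have h2 : (∏ j : Fin (n+1), if (Fin.cons 1 f : Fin (n+1) → Fin 2) j = 0 then (1:ℂ) else 0)
      = 0 := by
    rw [Fin.prod_univ_succ]
    simp
  rw [h2]
  ring

lemma Gt_substitution (n : ℕ) (lam : ℂ) (r : ℕ)
    (h : CDecomp (n+1) r (Gt (n+1) lam)) :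
    ∃ c : ℂ, ∃ s : ℕ, r = s + 1 ∧ CDecomp n s (Gt n (lam - c)) := by
  obtain ⟨a, v, hv⟩ := h
  -- u m f: the product over the tail slots
  set u : Fin r → (Fin n → Fin 2) → ℂ := fun m f => ∏ j : Fin n, v m j.succ (f j) with hu
  have hslice : ∀ (b : Fin 2) (f : Fin n → Fin 2),
      Gt (n+1) lam (Fin.cons b f) = ∑ m, a m * (v m 0 b * u m f) := by
    intro b f
    rw [hv]
    apply Finset.sum_congr rfl
    intro m _
    rw [Fin.prod_univ_succ]
    simp [hu]
  have hE : ∀ f : Fin n → Fin 2,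
      (∏ j, if f j = 0 then (1:ℂ) else 0) = ∑ m, a m * (v m 0 1 * u m f) := by
    intro f
    rw [← Gt_slice1 n lam f, hslice]
  have hG : ∀ f : Fin n → Fin 2, Gt n lam f = ∑ m, a m * (v m 0 0 * u m f) := by
    intro f
    rw [← Gt_slice0 n lam f, hslice]
  -- the slice-1 tensor is nonzero at f = 0
  have hne : ∃ m₀ : Fin r, a m₀ * v m₀ 0 1 ≠ 0 := by
    by_contra h
    push_neg at h
    have := hE (fun _ => 0)
    rw [Finset.sum_congr rfl (fun m _ => by
      rw [← mul_assoc, h m, zero_mul]), Finset.sum_const_zero] at this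
    simp at this
  obtain ⟨m₀, hm₀⟩ := hne
  have hv01 : v m₀ 0 1 ≠ 0 := fun h => hm₀ (by rw [h, mul_zero])
  have hr : r ≠ 0 := by rintro rfl; exact absurd m₀.2 (by omega)
  obtain ⟨s, rfl⟩ := Nat.exists_eq_succ_of_ne_zero hr
  set c : ℂ := v m₀ 0 0 / v m₀ 0 1 with hc
  refine ⟨c, s, rfl, ?_⟩
  set e := finSuccEquiv' m₀ with he
  refine ⟨fun m => a (e.symm (some m)) * (v (e.symm (some m)) 0 0 - c * v (e.symm (some m)) 0 1),
    fun m j b => v (e.symm (some m)) j.succ b, fun f => ?_⟩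
  have key : Gt n (lam - c) f = ∑ m : Fin (s+1), a m * ((v m 0 0 - c * v m 0 1) * u m f) := by
    have : Gt n (lam - c) f = Gt n lam f - c * ∏ j, if f j = 0 then (1:ℂ) else 0 := by
      unfold Gt; ring
    rw [this, hG, hE, Finset.mul_sum, ← Finset.sum_sub_distrib]
    apply Finset.sum_congr rfl
    intro m _
    ring
  rw [key, ← e.symm.sum_comp (fun m => a m * ((v m 0 0 - c * v m 0 1) * u m f)),
    Fintype.sum_option]
  have hzero : a (e.symm none) * ((v (e.symm none) 0 0 - c * v (e.symm none) 0 1) * u (e.symm none) f) = 0 := by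
    rw [he, finSuccEquiv'_symm_none, hc, div_mul_cancel₀ _ hv01, sub_self, zero_mul, mul_zero]
  rw [hzero, zero_add]
  apply Finset.sum_congr rfl
  intro m _
  simp only [hu]
  ring


lemma Gt_val (lam : ℂ) (a b : Fin 2) :
    Gt 2 lam ![a, b] = (if a = 0 ∧ b = 1 then 1 else 0) + (if a = 1 ∧ b = 0 then 1 else 0)
      + lam * (if a = 0 ∧ b = 0 then 1 else 0) := by
  unfold Gt
  rw [Fin.sum_univ_two, Fin.prod_univ_two, Fin.prod_univ_two, Fin.prod_univ_two]
  simp only [Matrix.cons_val_zero, Matrix.cons_val_one, Matrix.head_cons]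
  fin_cases a <;> fin_cases b <;> norm_num

lemma Gt_base (lam : ℂ) (r : ℕ) (h : CDecomp 2 r (Gt 2 lam)) : 2 ≤ r := by
  by_contra hlt
  push_neg at hlt
  obtain ⟨a, v, hv⟩ := h
  have hval : ∀ x y : Fin 2, Gt 2 lam ![x, y] = ∑ m, a m * (v m 0 x * v m 1 y) := by
    intro x y
    rw [hv ![x, y]]
    apply Finset.sum_congr rfl
    intro m _
    rw [Fin.prod_univ_two]
    simp
  interval_cases r
  · have h01 := hval 0 1
    rw [Gt_val] at h01
    norm_num at h01
  · have h01 := hval 0 1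
    have h10 := hval 1 0
    have h11 := hval 1 1
    have h00 := hval 0 0
    rw [Gt_val] at h01 h10 h11 h00
    norm_num [Fin.sum_univ_one] at h01 h10 h11 h00
    have : (1:ℂ) = 0 := by
      calc (1:ℂ) = (a 0 * (v 0 0 0 * v 0 1 1)) * (a 0 * (v 0 0 1 * v 0 1 0)) := by
            rw [← h01, ← h10]; ring
      _ = (a 0 * (v 0 0 0 * v 0 1 0)) * (a 0 * (v 0 0 1 * v 0 1 1)) := by ring
      _ = 0 := by rcases h11 with h|h|h <;> rw [h] <;> ring
    exact one_ne_zero this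


lemma Gt_lower (n : ℕ) : ∀ (lam : ℂ) (r : ℕ), CDecomp (n+2) r (Gt (n+2) lam) → n + 2 ≤ r := by
  induction n with
  | zero => exact fun lam r h => Gt_base lam r h
  | succ n ih =>
    intro lam r h
    obtain ⟨c, s, rfl, h'⟩ := Gt_substitution (n+2) lam r h
    have := ih (lam - c) s h'
    omega


lemma Wtensor_eq_Gt (k : ℕ) (f : Fin k → Fin 2) : Wtensor k f = Gt k 0 f := by
  unfold Wtensor Gt
  ring

lemma Wupper' (k : ℕ) (hk : 3 ≤ k) :
    ∃ v : Fin k → Fin k → Fin 2 → ℂ, ∀ f, Wtensor k f = ∑ m, ∏ j, v m j (f j) := by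
-- inlined

  have hk0 : (0:ℕ) < k := by omega
  set ω : ℂ := Complex.exp (2 * Real.pi * Complex.I / k) with hω
  have hprim : IsPrimitiveRoot ω k := Complex.isPrimitiveRoot_exp k (by omega)
  have hωk : ω ^ k = 1 := hprim.pow_eq_one
  set j0 : Fin k := ⟨0, hk0⟩ with hj0
  refine ⟨fun m j b => (if j = j0 then (k:ℂ)⁻¹ * ω ^ ((k-1) * (m:ℕ)) else 1)
      * ω ^ ((m:ℕ) * (b:ℕ)), fun f => ?_⟩
  set S : ℕ := ∑ j, (f j : ℕ) with hSdef
  have hSle : S ≤ k := by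
    calc S ≤ ∑ _j : Fin k, 1 := Finset.sum_le_sum (fun j _ => by omega)
    _ = k := by simp
  have hprod : ∀ m : Fin k, (∏ j, ((if j = j0 then (k:ℂ)⁻¹ * ω ^ ((k-1) * (m:ℕ)) else 1)
      * ω ^ ((m:ℕ) * ((f j):ℕ)))) = (k:ℂ)⁻¹ * ω ^ ((k-1) * (m:ℕ)) * ω ^ ((m:ℕ) * S) := by
    intro m
    rw [Finset.prod_mul_distrib, Finset.prod_ite_eq' univ j0
      (fun _ => (k:ℂ)⁻¹ * ω ^ ((k-1) * (m:ℕ))), Finset.prod_pow_eq_pow_sum,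
      ← Finset.mul_sum]
    simp
    exact Or.inl rfl
  rw [Finset.sum_congr rfl (fun m _ => hprod m)]
  have hmerge : ∀ m : Fin k, (k:ℂ)⁻¹ * ω ^ ((k-1) * (m:ℕ)) * ω ^ ((m:ℕ) * S)
      = (k:ℂ)⁻¹ * (ω ^ (k-1+S)) ^ (m:ℕ) := by
    intro m
    rw [mul_assoc, ← pow_add, ← pow_mul]
    ring_nf
  rw [Finset.sum_congr rfl (fun m _ => hmerge m), ← Finset.mul_sum]
  have hsum : ∑ m : Fin k, (ω ^ (k-1+S)) ^ (m:ℕ) = ∑ i ∈ range k, (ω ^ (k-1+S)) ^ i :=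
    Fin.sum_univ_eq_sum_range _ k
  rw [hsum]
  unfold Wtensor
  rw [Wtensor_eq, ← hSdef]
  by_cases hS1 : S = 1
  · rw [if_pos hS1]
    have : ω ^ (k-1+S) = 1 := by
      rw [(hprim.pow_eq_one_iff_dvd _).2 ⟨1, by omega⟩]
    have hkne : (k:ℂ) ≠ 0 := Nat.cast_ne_zero.mpr (by omega)
    rw [this]
    simp [hkne]
  · rw [if_neg hS1]
    have hne : ω ^ (k-1+S) ≠ 1 := by
      intro h
      rcases (hprim.pow_eq_one_iff_dvd _).1 h with ⟨c, hc⟩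
      have hclt : c < 2 := by
        by_contra h
        push_neg at h
        have : k * 2 ≤ k * c := Nat.mul_le_mul_left k h
        omega
      interval_cases c <;> omega
    rw [geom_sum_eq hne, ← pow_mul, mul_comm (k-1+S) k, pow_mul, hωk, one_pow]
    simp


/-- For `k ≥ 3`, the generalised W-state tensor `W_k` has tensor rank exactly `k`. -/
theorem stmt11 (k : ℕ) (hk : 3 ≤ k) : krank (Wtensor k) = k := by
  obtain ⟨v, hv⟩ := Wupper' k hk
  have hkS : k ∈ {r | ∃ v : Fin r → ∀ j : Fin k, Fin 2 → ℂ,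
      ∀ f, Wtensor k f = ∑ m, ∏ j, v m j (f j)} := ⟨v, hv⟩
  have hlow : ∀ r, (∃ w : Fin r → Fin k → Fin 2 → ℂ,
      ∀ f, Wtensor k f = ∑ m, ∏ j, w m j (f j)) → k ≤ r := by
    intro r ⟨w, hw⟩
    obtain ⟨n, rfl⟩ : ∃ n, k = n + 2 := ⟨k - 2, by omega⟩
    refine Gt_lower n 0 r ⟨fun _ => 1, w, fun f => ?_⟩
    rw [← Wtensor_eq_Gt, hw f]
    simp
  unfold krank
  apply le_antisymm
  · exact Nat.sInf_le hkS
  · exact hlow _ (Nat.sInf_mem ⟨k, hkS⟩)
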